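/- arXiv:1603.05857 — 6 statements merged into one kernel-verified Lean document; each statement's English description precedes it below -/
import Mathlib

section
/- Let G be a group, M a G-module, and α an element of the center of G. Then every element of H^1(G, M) is annihilated by the map M → M sending x to α·x − x; in particular, if this map is an automorphism of M, then H^1(G, M) = 0. -/
/-! For a 1-cocycle `Z` and `σ` commuting with `α`, expanding `Z (σ * α) = Z (α * σ)` by the
cocycle rule gives `α • Z σ - Z σ = σ • Z α - Z α`: twisting `Z` by `x ↦ α • x - x` yields the
coboundary of `Z α`. When `α` is central this twist is a `G`-equivariant endomorphism of `M`, so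
if it is bijective it can be undone, and `Z` itself is a coboundary. -/

open Function groupCohomology

namespace groupCohomology

variable {G M N : Type*}

section Cocycle

variable [Mul G] [AddCommGroup M] [SMul G M] {Z : G → M}

theorem IsCocycle₁.smul_sub_self_eq_of_commute (hZ : IsCocycle₁ Z) {σ α : G}
    (h : Commute σ α) : α • Z σ - Z σ = σ • Z α - Z α := by
  have hswap := hZ σ α
  rw [h.eq, hZ α σ] at hswap
  exact sub_eq_sub_iff_add_eq_add.mpr hswap

theorem IsCocycle₁.isCoboundary₁_smul_sub_self (hZ : IsCocycle₁ Z) {α : G}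
    (hα : ∀ σ, Commute σ α) : IsCoboundary₁ fun σ => α • Z σ - Z σ :=
  ⟨Z α, fun σ => (hZ.smul_sub_self_eq_of_commute (hα σ)).symm⟩

end Cocycle

section Equivariant

variable [Monoid G] [AddCommGroup M] [DistribMulAction G M] [AddCommGroup N]
  [DistribMulAction G N]

def smulSubSelf (α : G) (hα : ∀ σ, Commute σ α) : M →+[G] M where
  toFun x := α • x - x
  map_smul' σ x := by
    change α • σ • x - σ • x = σ • (α • x - x)
    rw [smul_sub, smul_smul, smul_smul, (hα σ).eq]
  map_zero' := by simp
  map_add' x y := by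
    simp only [smul_add]
    abel

theorem isCoboundary₁_of_isCoboundary₁_comp {f : M →+[G] N} (hf : Bijective f) {Z : G → M}
    (h : IsCoboundary₁ (f ∘ Z)) : IsCoboundary₁ Z := by
  obtain ⟨x, hx⟩ := h
  obtain ⟨A, rfl⟩ := hf.surjective x
  exact ⟨A, fun σ => hf.injective (by simpa [map_sub] using hx σ)⟩

end Equivariant

end groupCohomology

/-- Sah's theorem: if α is central in G, then any 1-cocycle Z : G → M becomes a
coboundary after applying x ↦ α•x − x; in particular if that map is bijective,
every 1-cocycle is a coboundary, i.e. H¹(G,M) = 0. -/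
theorem sah_theorem {G M : Type*} [Group G] [AddCommGroup M] [DistribMulAction G M]
    (α : G) (hα : α ∈ Subgroup.center G) :
    (∀ Z : G → M, (∀ σ τ : G, Z (σ * τ) = Z σ + σ • Z τ) →
      ∃ A : M, ∀ σ : G, α • Z σ - Z σ = σ • A - A) ∧
    (Function.Bijective (fun x : M => α • x - x) →
      ∀ Z : G → M, (∀ σ τ : G, Z (σ * τ) = Z σ + σ • Z τ) →
        ∃ A : M, ∀ σ : G, Z σ = σ • A - A) := by
  have hcomm : ∀ σ : G, Commute σ α := Subgroup.mem_center_iff.mp hα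
  have cocycle {Z : G → M} (hZ : ∀ σ τ : G, Z (σ * τ) = Z σ + σ • Z τ) : IsCocycle₁ Z :=
    fun σ τ => (hZ σ τ).trans (add_comm _ _)
  refine ⟨fun Z hZ => ?_, fun hbij Z hZ => ?_⟩
  · obtain ⟨A, hA⟩ := (cocycle hZ).isCoboundary₁_smul_sub_self hcomm
    exact ⟨A, fun σ => (hA σ).symm⟩
  · obtain ⟨A, hA⟩ := isCoboundary₁_of_isCoboundary₁_comp (f := smulSubSelf α hcomm) hbij
      ((cocycle hZ).isCoboundary₁_smul_sub_self hcomm)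
    exact ⟨A, fun σ => (hA σ).symm⟩
end

section
/- Let G be a group acting on an abelian group M and let α be a central element of G such that the map x ↦ α·x − x is bijective on M. Then every cocycle Z : G → M satisfying Z(στ) = Z(σ) + σ·Z(τ) is a coboundary, i.e., there exists A ∈ M with Z(σ) = σ·A − A for all σ ∈ G. -/
/-!
Expanding `Z (α σ) = Z (σ α)` with the cocycle identity gives `(α - 1) Z σ = (σ - 1) Z α`.
Choosing `A` with `(α - 1) A = Z α`, the coboundary `σ ↦ (σ - 1) A` satisfies the same identity
because `α` commutes with `σ`, so it agrees with `Z` after applying the injective map `α - 1`.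
-/

namespace groupCohomology

variable {G A : Type*} [Monoid G] [AddCommGroup A] [DistribMulAction G A]

theorem IsCocycle₁.smul_sub_self_eq_of_commute_s1 {f : G → A} (hf : IsCocycle₁ f) {a g : G}
    (h : Commute a g) : a • f g - f g = g • f a - f a := by
  have hfag : a • f g + f a = g • f a + f g := by rw [← hf, ← hf, h.eq]
  rw [sub_eq_sub_iff_add_eq_add, hfag, add_comm]

theorem _root_.Commute.smul_sub_self_comm {a g : G} (h : Commute a g) (x : A) :
    a • (g • x - x) - (g • x - x) = g • (a • x - x) - (a • x - x) := by
  rw [smul_sub, smul_sub, smul_smul, smul_smul, h.eq]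
  abel

theorem isCoboundary₁_of_bijective_smul_sub_self {f : G → A} (hf : IsCocycle₁ f) {a : G}
    (ha : ∀ g, Commute a g) (hbij : Function.Bijective fun x : A => a • x - x) :
    IsCoboundary₁ f := by
  obtain ⟨x, hx : a • x - x = f a⟩ := hbij.2 (f a)
  refine ⟨x, fun g => hbij.1 ?_⟩
  change a • (g • x - x) - (g • x - x) = a • f g - f g
  rw [(ha g).smul_sub_self_comm, hx, hf.smul_sub_self_eq_of_commute_s1 (ha g)]

end groupCohomology

open groupCohomology in
/-- Explicit cocycle form of Sah's theorem: if α is central and x ↦ α•x − x is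
bijective on M, then every 1-cocycle Z : G → M is a coboundary. -/
theorem sah_cocycle {G M : Type*} [Group G] [AddCommGroup M] [DistribMulAction G M]
    (α : G) (hα : α ∈ Subgroup.center G)
    (hbij : Function.Bijective (fun x : M => α • x - x))
    (Z : G → M) (hZ : ∀ σ τ : G, Z (σ * τ) = Z σ + σ • Z τ) :
    ∃ A : M, ∀ σ : G, Z σ = σ • A - A := by
  have hZ_cocycle : IsCocycle₁ Z := fun σ τ => (hZ σ τ).trans (add_comm _ _)
  have hα_comm : ∀ σ, Commute α σ := fun σ => (Subgroup.mem_center_iff.mp hα σ).symm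
  obtain ⟨A, hA⟩ := isCoboundary₁_of_bijective_smul_sub_self hZ_cocycle hα_comm hbij
  exact ⟨A, fun σ => (hA σ).symm⟩
end

section
/- Let G be a finite group acting on a finite abelian group M, and suppose the p-Sylow subgroup of G is cyclic, generated by σ₀. Then any cocycle Z : G → M with values in the p-primary part of M which satisfies the local conditions (for every σ ∈ G there exists A_σ ∈ M with Z(σ) = σ·A_σ − A_σ) restricts to a coboundary on the p-Sylow subgroup; consequently H^1_loc(G, M) = 0 when M is a p-group. -/
/-!
Write `W` for the local cocycle `Z` minus the coboundary of the `A` with `Z σ₀ = σ₀ • A - A`.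
Then `W` is a cocycle vanishing at `σ₀`, hence on the whole cyclic Sylow subgroup `P`.
Corestriction from `P` to `G` shows that `[G : P] • W` is a coboundary, and `[G : P]` is
prime to `p`, so it acts invertibly on the `p`-group `M`. Hence `W`, and with it `Z`, is a
coboundary.
-/

open groupCohomology

namespace groupCohomology

variable {G A : Type*} [Group G] [AddCommGroup A] [DistribMulAction G A] {f : G → A}

theorem IsCocycle₁.sub_coboundary (hf : IsCocycle₁ f) (x : A) :
    IsCocycle₁ fun g => f g - (g • x - x) := fun g h => by
  simp only [hf g h, mul_smul, smul_sub]
  abel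

def IsCocycle₁.ker (hf : IsCocycle₁ f) : Subgroup G where
  carrier := {g | f g = 0}
  one_mem' := map_one_of_isCocycle₁ hf
  mul_mem' {g h} (hg : f g = 0) (hh : f h = 0) := show f (g * h) = 0 by
    rw [hf, hg, hh, smul_zero, add_zero]
  inv_mem' {g} (hg : f g = 0) := show f g⁻¹ = 0 by
    have h := map_inv_of_isCocycle₁ hf g
    rwa [hg, neg_zero, smul_eq_zero_iff_eq] at h

theorem IsCocycle₁.eq_coboundary_of_mem_zpowers (hf : IsCocycle₁ f) {x : A} {g₀ : G}
    (hg₀ : f g₀ = g₀ • x - x) : ∀ g ∈ Subgroup.zpowers g₀, f g = g • x - x := by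
  have hle : Subgroup.zpowers g₀ ≤ (hf.sub_coboundary x).ker :=
    Subgroup.zpowers_le.mpr (sub_eq_zero.mpr hg₀)
  exact fun g hg => sub_eq_zero.mp (hle hg)

theorem IsCocycle₁.isCoboundary₁_index_nsmul (hf : IsCocycle₁ f) (H : Subgroup G)
    [H.FiniteIndex] (hH : ∀ h ∈ H, f h = 0) : IsCoboundary₁ fun g => H.index • f g := by
  classical
  have := Fintype.ofFinite (G ⧸ H)
  let B : A := ∑ q : G ⧸ H, f q.out
  refine ⟨-B, fun g => ?_⟩
  -- `g * q.out` and `(g • q).out` differ by an element of `H`, on which `f` vanishes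
  have hshift (q : G ⧸ H) : f (g * q.out) = f (g • q).out := by
    have hmem : (g • q).out⁻¹ * (g * q.out) ∈ H := by
      rw [← QuotientGroup.eq, QuotientGroup.out_eq', ← smul_eq_mul,
        MulAction.Quotient.mk_smul_out]
    rw [← mul_inv_cancel_left (g • q).out (g * q.out), hf, hH _ hmem, smul_zero, zero_add]
  have hsum : g • B + H.index • f g = B := calc
    g • B + H.index • f g = ∑ q : G ⧸ H, f (g * q.out) := by
      simp only [hf g, Finset.sum_add_distrib, Finset.sum_const, Finset.smul_sum, B,
        Finset.card_univ, Subgroup.index, Nat.card_eq_fintype_card]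
    _ = B := by
      simp only [hshift]
      exact Fintype.sum_equiv (MulAction.toPerm g) _ _ fun _ => rfl
  rw [smul_neg, sub_neg_eq_add, neg_add_eq_sub, sub_eq_iff_eq_add']
  exact hsum.symm

theorem IsCoboundary₁.of_nsmul [Finite A] {n : ℕ} (hn : (Nat.card A).Coprime n)
    (hf : IsCoboundary₁ fun g => n • f g) : IsCoboundary₁ f := by
  obtain ⟨x, hx⟩ := hf
  -- `c := gcdB` is an inverse of `n` modulo `Nat.card A`
  set c : ℤ := (Nat.card A).gcdB n
  have hc (v : A) : c • n • v = v := by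
    simpa using (nsmulCoprime hn).symm_apply_apply v
  refine ⟨c • x, fun g => ?_⟩
  have hxg : g • x - x = n • f g := hx g
  rw [← hc (f g), ← hxg, smul_sub, smul_comm]

end groupCohomology

/-- If the p-Sylow subgroup of a finite group G is cyclic, generated by σ₀, and M
is a finite abelian p-group, then every cocycle Z : G → M satisfying the local
conditions restricts to a coboundary on the p-Sylow subgroup; consequently it is
itself a coboundary, i.e. H¹_loc(G, M) = 0. -/
theorem h1loc_vanishes_of_cyclic_sylow {G M : Type*} [Group G] [Finite G]
    [AddCommGroup M] [Finite M] [DistribMulAction G M]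
    (p : ℕ) (hp : p.Prime) (hM : ∃ k : ℕ, Nat.card M = p ^ k)
    (P : Sylow p G) (σ₀ : G) (hcyc : (P : Subgroup G) = Subgroup.zpowers σ₀)
    (Z : G → M) (hZ : ∀ σ τ : G, Z (σ * τ) = Z σ + σ • Z τ)
    (hloc : ∀ σ : G, ∃ A : M, Z σ = σ • A - A) :
    (∃ A : M, ∀ σ ∈ (P : Subgroup G), Z σ = σ • A - A) ∧
    (∃ A : M, ∀ σ : G, Z σ = σ • A - A) := by
  have : Fact p.Prime := ⟨hp⟩
  have hZ : IsCocycle₁ Z := fun σ τ => (hZ σ τ).trans (add_comm _ _)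
  obtain ⟨A, hA⟩ := hloc σ₀
  have hP : ∀ σ ∈ (P : Subgroup G), Z σ = σ • A - A := hcyc ▸ hZ.eq_coboundary_of_mem_zpowers hA
  refine ⟨⟨A, hP⟩, ?_⟩
  have hcop : (Nat.card M).Coprime (P : Subgroup G).index := by
    obtain ⟨k, hk⟩ := hM
    exact hk ▸ (hp.coprime_pow_of_not_dvd P.not_dvd_index).symm
  obtain ⟨B, hB⟩ := IsCoboundary₁.of_nsmul hcop <|
    (hZ.sub_coboundary A).isCoboundary₁_index_nsmul P fun σ hσ => sub_eq_zero.mpr (hP σ hσ)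
  refine ⟨B + A, fun σ => ?_⟩
  rw [smul_add, sub_eq_iff_eq_add.mp (hB σ).symm]
  abel
end

section
/- Let q and n₁, n₂ be positive integers, n = n₁ + n₂, and let G be a group of block-diagonal matrices in GL_n(ℤ/qℤ) of the form diag(B₁, B₂) with B₁ ∈ GL_{n₁}(ℤ/qℤ), B₂ ∈ GL_{n₂}(ℤ/qℤ). Let G₁ and G₂ be the projections of G onto the two blocks. Then H^1_loc(G, (ℤ/qℤ)^n) = 0 if and only if H^1_loc(G₁, (ℤ/qℤ)^{n₁}) = 0 and H^1_loc(G₂, (ℤ/qℤ)^{n₂}) = 0. -/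
open Matrix

/-- H¹_loc(H, (ℤ/qℤ)ⁿ) = 0 for a subgroup H ≤ GL_n(ℤ/qℤ): every 1-cocycle
satisfying the local conditions is a coboundary. -/
def GLH1locTrivial {n q : ℕ} [NeZero q]
    (H : Subgroup (GeneralLinearGroup (Fin n) (ZMod q))) : Prop :=
  ∀ Z : H → (Fin n → ZMod q),
    (∀ σ τ : H, Z (σ * τ) = Z σ +
      ((σ : GeneralLinearGroup (Fin n) (ZMod q)) : Matrix (Fin n) (Fin n) (ZMod q)).mulVec (Z τ)) →
    (∀ σ : H, ∃ A : Fin n → ZMod q,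
      Z σ = ((σ : GeneralLinearGroup (Fin n) (ZMod q)) : Matrix (Fin n) (Fin n) (ZMod q)).mulVec A - A) →
    ∃ A : Fin n → ZMod q, ∀ σ : H,
      Z σ = ((σ : GeneralLinearGroup (Fin n) (ZMod q)) : Matrix (Fin n) (Fin n) (ZMod q)).mulVec A - A

/-- H¹_loc(G, (ℤ/qℤ)^{n₁} × (ℤ/qℤ)^{n₂}) = 0 for a group G of block-diagonal
matrices, realized as a subgroup of GL_{n₁} × GL_{n₂} acting componentwise. -/
def GLH1locTrivialProd {n₁ n₂ q : ℕ} [NeZero q]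
    (G : Subgroup (GeneralLinearGroup (Fin n₁) (ZMod q) × GeneralLinearGroup (Fin n₂) (ZMod q))) :
    Prop :=
  ∀ Z : G → (Fin n₁ → ZMod q) × (Fin n₂ → ZMod q),
    (∀ σ τ : G, Z (σ * τ) = Z σ +
      ((σ.val.1 : Matrix (Fin n₁) (Fin n₁) (ZMod q)).mulVec (Z τ).1,
       (σ.val.2 : Matrix (Fin n₂) (Fin n₂) (ZMod q)).mulVec (Z τ).2)) →
    (∀ σ : G, ∃ A : (Fin n₁ → ZMod q) × (Fin n₂ → ZMod q),
      Z σ = ((σ.val.1 : Matrix (Fin n₁) (Fin n₁) (ZMod q)).mulVec A.1 - A.1,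
             (σ.val.2 : Matrix (Fin n₂) (Fin n₂) (ZMod q)).mulVec A.2 - A.2)) →
    ∃ A : (Fin n₁ → ZMod q) × (Fin n₂ → ZMod q), ∀ σ : G,
      Z σ = ((σ.val.1 : Matrix (Fin n₁) (Fin n₁) (ZMod q)).mulVec A.1 - A.1,
             (σ.val.2 : Matrix (Fin n₂) (Fin n₂) (ZMod q)).mulVec A.2 - A.2)

/-! A local cocycle vanishes at every `σ` acting trivially, since there `Z σ = σ A_σ - A_σ = 0`.
Hence a local cocycle is constant on the fibres of any surjection `G → H` through which the
action factors, so inflation along `G → Gᵢ` is a bijection between local cocycles of `Gᵢ` and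
local cocycles of `G` with values in the `i`-th block, matching coboundaries; and everything
(cocycle condition, local condition, coboundary) splits over the two blocks. -/

namespace Representation

variable {k G H V W : Type*} [Semiring k] [AddCommGroup V] [Module k V]
  [AddCommGroup W] [Module k W]

section Monoid

variable [Monoid G] (ρ : Representation k G V)

def IsCocycle (Z : G → V) : Prop :=
  ∀ σ τ, Z (σ * τ) = Z σ + ρ σ (Z τ)

def IsCoboundary (Z : G → V) : Prop :=
  ∃ A, ∀ σ, Z σ = ρ σ A - A

def IsLocallyCoboundary (Z : G → V) : Prop :=
  ∀ σ, ∃ A, Z σ = ρ σ A - A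

def H1LocTrivial : Prop :=
  ∀ Z : G → V, ρ.IsCocycle Z → ρ.IsLocallyCoboundary Z → ρ.IsCoboundary Z

variable {ρ}

theorem isCocycle_zero : ρ.IsCocycle 0 := fun _ _ => by simp

theorem isCoboundary_zero : ρ.IsCoboundary 0 := ⟨0, fun _ => by simp⟩

theorem IsCoboundary.isLocallyCoboundary {Z : G → V} (h : ρ.IsCoboundary Z) :
    ρ.IsLocallyCoboundary Z :=
  let ⟨A, hA⟩ := h; fun σ => ⟨A, hA σ⟩

theorem IsLocallyCoboundary.eq_zero_of_eq_one {Z : G → V} (h : ρ.IsLocallyCoboundary Z)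
    {σ : G} (hσ : ρ σ = 1) : Z σ = 0 := by
  obtain ⟨A, hA⟩ := h σ
  rw [hA, hσ, Module.End.one_apply, sub_self]

variable {ρ' : Representation k G W}

theorem isCocycle_prod_iff {Z : G → V × W} :
    (ρ.prod ρ').IsCocycle Z ↔ ρ.IsCocycle (Prod.fst ∘ Z) ∧ ρ'.IsCocycle (Prod.snd ∘ Z) := by
  simp only [IsCocycle, Prod.ext_iff, forall_and]
  rfl

theorem isCoboundary_prod_iff {Z : G → V × W} :
    (ρ.prod ρ').IsCoboundary Z ↔
      ρ.IsCoboundary (Prod.fst ∘ Z) ∧ ρ'.IsCoboundary (Prod.snd ∘ Z) :=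
  ⟨fun ⟨A, hA⟩ =>
      ⟨⟨A.1, fun σ => congrArg Prod.fst (hA σ)⟩, ⟨A.2, fun σ => congrArg Prod.snd (hA σ)⟩⟩,
    fun ⟨⟨A₁, h₁⟩, ⟨A₂, h₂⟩⟩ => ⟨(A₁, A₂), fun σ => Prod.ext (h₁ σ) (h₂ σ)⟩⟩

theorem isLocallyCoboundary_prod_iff {Z : G → V × W} :
    (ρ.prod ρ').IsLocallyCoboundary Z ↔
      ρ.IsLocallyCoboundary (Prod.fst ∘ Z) ∧ ρ'.IsLocallyCoboundary (Prod.snd ∘ Z) := by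
  refine ⟨fun h => ⟨fun σ => ?_, fun σ => ?_⟩, fun ⟨h₁, h₂⟩ σ => ?_⟩
  · obtain ⟨A, hA⟩ := h σ
    exact ⟨A.1, congrArg Prod.fst hA⟩
  · obtain ⟨A, hA⟩ := h σ
    exact ⟨A.2, congrArg Prod.snd hA⟩
  · obtain ⟨⟨A₁, hA₁⟩, ⟨A₂, hA₂⟩⟩ := And.intro (h₁ σ) (h₂ σ)
    exact ⟨(A₁, A₂), Prod.ext hA₁ hA₂⟩

theorem h1LocTrivial_prod_iff :
    (ρ.prod ρ').H1LocTrivial ↔ ρ.H1LocTrivial ∧ ρ'.H1LocTrivial := by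
  refine ⟨fun h => ⟨fun Z₁ hc hl => ?_, fun Z₂ hc hl => ?_⟩, fun ⟨h₁, h₂⟩ Z hc hl => ?_⟩
  · have := h (fun σ => (Z₁ σ, 0)) (isCocycle_prod_iff.2 ⟨hc, isCocycle_zero⟩)
      (isLocallyCoboundary_prod_iff.2 ⟨hl, isCoboundary_zero.isLocallyCoboundary⟩)
    exact (isCoboundary_prod_iff.1 this).1
  · have := h (fun σ => (0, Z₂ σ)) (isCocycle_prod_iff.2 ⟨isCocycle_zero, hc⟩)
      (isLocallyCoboundary_prod_iff.2 ⟨isCoboundary_zero.isLocallyCoboundary, hl⟩)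
    exact (isCoboundary_prod_iff.1 this).2
  · rw [isCocycle_prod_iff] at hc
    rw [isLocallyCoboundary_prod_iff] at hl
    exact isCoboundary_prod_iff.2 ⟨h₁ _ hc.1 hl.1, h₂ _ hc.2 hl.2⟩

end Monoid

section Group

variable [Group G]

theorem IsCocycle.eq_of_rep_eq {ρ : Representation k G V} {Z : G → V} (hc : ρ.IsCocycle Z)
    (hl : ρ.IsLocallyCoboundary Z) {σ τ : G} (h : ρ σ = ρ τ) : Z σ = Z τ := by
  have hρ : ρ (σ * τ⁻¹) = 1 := by rw [map_mul, h, ← map_mul, mul_inv_cancel, map_one]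
  calc Z σ = Z (σ * τ⁻¹ * τ) := by rw [inv_mul_cancel_right]
    _ = Z τ := by rw [hc, hl.eq_zero_of_eq_one hρ, hρ, zero_add, Module.End.one_apply]

variable [Group H] {f : G →* H} {ρ : Representation k H V}

theorem isCocycle_comp_iff (hf : Function.Surjective f) {Z : H → V} :
    IsCocycle (ρ.comp f) (Z ∘ f) ↔ ρ.IsCocycle Z := by
  refine ⟨fun h σ τ => ?_, fun h σ τ => ?_⟩
  · obtain ⟨⟨σ, rfl⟩, ⟨τ, rfl⟩⟩ := And.intro (hf σ) (hf τ)
    simpa using h σ τ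
  · simpa using h (f σ) (f τ)

theorem isCoboundary_comp_iff (hf : Function.Surjective f) {Z : H → V} :
    IsCoboundary (ρ.comp f) (Z ∘ f) ↔ ρ.IsCoboundary Z := by
  refine ⟨fun ⟨A, hA⟩ => ⟨A, fun σ => ?_⟩, fun ⟨A, hA⟩ => ⟨A, fun σ => hA (f σ)⟩⟩
  obtain ⟨σ, rfl⟩ := hf σ
  exact hA σ

theorem isLocallyCoboundary_comp_iff (hf : Function.Surjective f) {Z : H → V} :
    IsLocallyCoboundary (ρ.comp f) (Z ∘ f) ↔ ρ.IsLocallyCoboundary Z := by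
  refine ⟨fun h σ => ?_, fun h σ => h (f σ)⟩
  obtain ⟨σ, rfl⟩ := hf σ
  exact h σ

theorem exists_comp_eq_of_isCocycle (hf : Function.Surjective f) {Z : G → V}
    (hc : IsCocycle (ρ.comp f) Z) (hl : IsLocallyCoboundary (ρ.comp f) Z) :
    ∃ W : H → V, W ∘ f = Z :=
  ⟨Z ∘ Function.surjInv hf, funext fun σ =>
    hc.eq_of_rep_eq hl (by simp only [MonoidHom.comp_apply, Function.surjInv_eq hf])⟩

theorem h1LocTrivial_comp_iff (hf : Function.Surjective f) :
    H1LocTrivial (ρ.comp f) ↔ ρ.H1LocTrivial := by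
  refine ⟨fun h Z hc hl => ?_, fun h Z hc hl => ?_⟩
  · rw [← isCocycle_comp_iff hf] at hc
    rw [← isLocallyCoboundary_comp_iff hf] at hl
    exact (isCoboundary_comp_iff hf).1 (h _ hc hl)
  · obtain ⟨W, rfl⟩ := exists_comp_eq_of_isCocycle hf hc hl
    rw [isCocycle_comp_iff hf] at hc
    rw [isLocallyCoboundary_comp_iff hf] at hl
    exact (isCoboundary_comp_iff hf).2 (h W hc hl)

end Group

end Representation

open Representation

namespace Matrix.GeneralLinearGroup

variable (n R : Type*) [Fintype n] [DecidableEq n] [CommRing R]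

def stdRep : Representation R (GL n R) (n → R) :=
  toLinAlgEquiv'.toAlgHom.toMonoidHom.comp (Units.coeHom _)

end Matrix.GeneralLinearGroup

open Matrix.GeneralLinearGroup

theorem glH1locTrivial_iff {n q : ℕ} [NeZero q] (H : Subgroup (GL (Fin n) (ZMod q))) :
    GLH1locTrivial H ↔ H1LocTrivial ((stdRep (Fin n) (ZMod q)).comp H.subtype) :=
  Iff.rfl

theorem glH1locTrivialProd_iff {n₁ n₂ q : ℕ} [NeZero q]
    (G : Subgroup (GL (Fin n₁) (ZMod q) × GL (Fin n₂) (ZMod q))) :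
    GLH1locTrivialProd G ↔
      H1LocTrivial (Representation.prod (((stdRep _ _).comp (MonoidHom.fst _ _)).comp G.subtype)
        (((stdRep _ _).comp (MonoidHom.snd _ _)).comp G.subtype)) :=
  Iff.rfl

theorem h1loc_block_diagonal_general (q n₁ n₂ : ℕ) [NeZero q]
    (G : Subgroup (GeneralLinearGroup (Fin n₁) (ZMod q) × GeneralLinearGroup (Fin n₂) (ZMod q))) :
    GLH1locTrivialProd G ↔
      GLH1locTrivial (G.map (MonoidHom.fst _ _)) ∧ GLH1locTrivial (G.map (MonoidHom.snd _ _)) := by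
  rw [glH1locTrivialProd_iff, h1LocTrivial_prod_iff, glH1locTrivial_iff, glH1locTrivial_iff,
    ← h1LocTrivial_comp_iff ((MonoidHom.fst _ _).subgroupMap_surjective G),
    ← h1LocTrivial_comp_iff ((MonoidHom.snd _ _).subgroupMap_surjective G)]
  -- `f.subgroupMap G g` is `f g` by definition
  rfl

/-- For a group G of block-diagonal matrices diag(B₁,B₂) in GL_{n₁+n₂}(ℤ/qℤ),
H¹_loc(G,(ℤ/qℤ)ⁿ) = 0 iff H¹_loc(Gᵢ,(ℤ/qℤ)^{nᵢ}) = 0 for the two block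
projections G₁, G₂ of G. -/
theorem h1loc_block_diagonal (q n₁ n₂ : ℕ) (hq : 0 < q) (h₁ : 0 < n₁) (h₂ : 0 < n₂)
    [NeZero q]
    (G : Subgroup (GeneralLinearGroup (Fin n₁) (ZMod q) × GeneralLinearGroup (Fin n₂) (ZMod q))) :
    GLH1locTrivialProd G ↔
      GLH1locTrivial (G.map (MonoidHom.fst _ _)) ∧ GLH1locTrivial (G.map (MonoidHom.snd _ _)) :=
  h1loc_block_diagonal_general q n₁ n₂ G
end

section
/- Let G₁ and G₂ be groups acting on abelian groups M₁ and M₂ respectively, and let G = G₁ × G₂ act on M₁ ⊕ M₂ componentwise. If H^1_loc(G₁, M₁) = 0 and H^1_loc(G₂, M₂) = 0, then H^1_loc(G, M₁ ⊕ M₂) = 0. -/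
/-! A locally trivial cocycle `Z` of `G₁ × G₂` has no cross terms: `(Z (1, τ)).1` and
`(Z (σ, 1)).2` vanish because `1` acts trivially. Splitting `(σ₁, σ₂) = (σ₁, 1) * (1, σ₂)`
therefore gives `Z (σ₁, σ₂) = ((Z (σ₁, 1)).1, (Z (1, σ₂)).2)`, and the two components are
locally trivial cocycles of `G₁` and `G₂`, hence coboundaries of some `A₁` and `A₂`;
then `Z` is the coboundary of `(A₁, A₂)`. -/

namespace H1LocProd

variable {G₁ G₂ M₁ M₂ : Type*} [Group G₁] [Group G₂] [AddCommGroup M₁] [AddCommGroup M₂]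
  [DistribMulAction G₁ M₁] [DistribMulAction G₂ M₂] {Z : G₁ × G₂ → M₁ × M₂}

lemma fst_cocycle_left
    (hZ : ∀ σ τ : G₁ × G₂, Z (σ * τ) = Z σ + (σ.1 • (Z τ).1, σ.2 • (Z τ).2)) (σ τ : G₁) :
    (Z (σ * τ, 1)).1 = (Z (σ, 1)).1 + σ • (Z (τ, 1)).1 := by
  simpa using congrArg Prod.fst (hZ (σ, 1) (τ, 1))

lemma snd_cocycle_right
    (hZ : ∀ σ τ : G₁ × G₂, Z (σ * τ) = Z σ + (σ.1 • (Z τ).1, σ.2 • (Z τ).2)) (σ τ : G₂) :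
    (Z (1, σ * τ)).2 = (Z (1, σ)).2 + σ • (Z (1, τ)).2 := by
  simpa using congrArg Prod.snd (hZ (1, σ) (1, τ))

lemma fst_local_left
    (hloc : ∀ σ : G₁ × G₂, ∃ A : M₁ × M₂, Z σ = (σ.1 • A.1 - A.1, σ.2 • A.2 - A.2))
    (σ : G₁) : ∃ A : M₁, (Z (σ, 1)).1 = σ • A - A := by
  obtain ⟨A, hA⟩ := hloc (σ, 1)
  exact ⟨A.1, congrArg Prod.fst hA⟩

lemma snd_local_right
    (hloc : ∀ σ : G₁ × G₂, ∃ A : M₁ × M₂, Z σ = (σ.1 • A.1 - A.1, σ.2 • A.2 - A.2))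
    (τ : G₂) : ∃ A : M₂, (Z (1, τ)).2 = τ • A - A := by
  obtain ⟨A, hA⟩ := hloc (1, τ)
  exact ⟨A.2, congrArg Prod.snd hA⟩

lemma fst_apply_one_left
    (hloc : ∀ σ : G₁ × G₂, ∃ A : M₁ × M₂, Z σ = (σ.1 • A.1 - A.1, σ.2 • A.2 - A.2))
    (τ : G₂) : (Z (1, τ)).1 = 0 := by
  obtain ⟨A, hA⟩ := hloc (1, τ)
  simpa using congrArg Prod.fst hA

lemma snd_apply_left_one
    (hloc : ∀ σ : G₁ × G₂, ∃ A : M₁ × M₂, Z σ = (σ.1 • A.1 - A.1, σ.2 • A.2 - A.2))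
    (σ : G₁) : (Z (σ, 1)).2 = 0 := by
  obtain ⟨A, hA⟩ := hloc (σ, 1)
  simpa using congrArg Prod.snd hA

lemma apply_eq_left_right
    (hZ : ∀ σ τ : G₁ × G₂, Z (σ * τ) = Z σ + (σ.1 • (Z τ).1, σ.2 • (Z τ).2))
    (hloc : ∀ σ : G₁ × G₂, ∃ A : M₁ × M₂, Z σ = (σ.1 • A.1 - A.1, σ.2 • A.2 - A.2))
    (σ : G₁ × G₂) : Z σ = ((Z (σ.1, 1)).1, (Z (1, σ.2)).2) := by
  have hsplit := hZ (σ.1, 1) (1, σ.2)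
  simp only [Prod.mk_mul_mk, mul_one, one_mul, one_smul] at hsplit
  rw [hsplit]
  ext <;> simp [fst_apply_one_left hloc, snd_apply_left_one hloc]

end H1LocProd

/-- If H¹_loc(G₁,M₁) = 0 and H¹_loc(G₂,M₂) = 0, then H¹_loc(G₁ × G₂, M₁ ⊕ M₂) = 0
for the componentwise action: every cocycle of G₁ × G₂ with values in M₁ × M₂
satisfying the local conditions is a coboundary. -/
theorem h1loc_prod {G₁ G₂ M₁ M₂ : Type*} [Group G₁] [Group G₂]
    [AddCommGroup M₁] [AddCommGroup M₂]
    [DistribMulAction G₁ M₁] [DistribMulAction G₂ M₂]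
    (h₁ : ∀ Z₁ : G₁ → M₁, (∀ σ τ : G₁, Z₁ (σ * τ) = Z₁ σ + σ • Z₁ τ) →
      (∀ σ : G₁, ∃ A : M₁, Z₁ σ = σ • A - A) → ∃ A : M₁, ∀ σ : G₁, Z₁ σ = σ • A - A)
    (h₂ : ∀ Z₂ : G₂ → M₂, (∀ σ τ : G₂, Z₂ (σ * τ) = Z₂ σ + σ • Z₂ τ) →
      (∀ σ : G₂, ∃ A : M₂, Z₂ σ = σ • A - A) → ∃ A : M₂, ∀ σ : G₂, Z₂ σ = σ • A - A)
    (Z : G₁ × G₂ → M₁ × M₂)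
    (hZ : ∀ σ τ : G₁ × G₂, Z (σ * τ) = Z σ + (σ.1 • (Z τ).1, σ.2 • (Z τ).2))
    (hloc : ∀ σ : G₁ × G₂, ∃ A : M₁ × M₂, Z σ = (σ.1 • A.1 - A.1, σ.2 • A.2 - A.2)) :
    ∃ A : M₁ × M₂, ∀ σ : G₁ × G₂, Z σ = (σ.1 • A.1 - A.1, σ.2 • A.2 - A.2) := by
  obtain ⟨A₁, hA₁⟩ := h₁ (fun σ => (Z (σ, 1)).1)
    (H1LocProd.fst_cocycle_left hZ) (H1LocProd.fst_local_left hloc)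
  obtain ⟨A₂, hA₂⟩ := h₂ (fun τ => (Z (1, τ)).2)
    (H1LocProd.snd_cocycle_right hZ) (H1LocProd.snd_local_right hloc)
  exact ⟨(A₁, A₂), fun σ => by rw [H1LocProd.apply_eq_left_right hZ hloc σ, hA₁, hA₂]⟩
end

section
/- Let G be a finite group, M a G-module which is a finite p-group, and suppose every p-Sylow subgroup of G is cyclic. Then H^1_loc(G, M) = 0. -/
/-!
Let `P` be a Sylow `p`-subgroup, generated by `g`. Subtracting the coboundary of an `A` with
`Z g = g • A - A` gives a cocycle vanishing at `g`, hence on all of `P`. Averaging such a cocycle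
over `G ⧸ P` shows that `[G : P] • Z` is a coboundary, and `[G : P]` is prime to `p`, hence
invertible on the `p`-group `M`.
-/

section OneCocycle

variable {G M : Type*} [Group G] [AddCommGroup M] [DistribMulAction G M]

def IsOneCocycle (Z : G → M) : Prop :=
  ∀ σ τ : G, Z (σ * τ) = Z σ + σ • Z τ

def IsOneCoboundary (Z : G → M) : Prop :=
  ∃ A : M, ∀ σ : G, Z σ = σ • A - A

namespace IsOneCocycle

variable {Z : G → M}

theorem map_one (hZ : IsOneCocycle Z) : Z 1 = 0 := by
  simpa using hZ 1 1

theorem sub_coboundary (hZ : IsOneCocycle Z) (A : M) :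
    IsOneCocycle fun σ ↦ Z σ - (σ • A - A) := by
  intro σ τ
  simp only [hZ σ τ, mul_smul, smul_sub]
  abel

def ker (hZ : IsOneCocycle Z) : Subgroup G where
  carrier := {σ | Z σ = 0}
  one_mem' := hZ.map_one
  mul_mem' {σ τ} (hσ : Z σ = 0) (hτ : Z τ = 0) := show Z (σ * τ) = 0 by
    rw [hZ, hσ, hτ, smul_zero, add_zero]
  inv_mem' {σ} (hσ : Z σ = 0) := by
    have h := hZ σ σ⁻¹
    rw [mul_inv_cancel, hZ.map_one, hσ, zero_add, eq_comm] at h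
    exact (smul_eq_zero_iff_eq σ).mp h

theorem mem_ker (hZ : IsOneCocycle Z) {σ : G} : σ ∈ hZ.ker ↔ Z σ = 0 :=
  Iff.rfl

theorem eq_add_smul_of_inv_mul_mem {H : Subgroup G} (hZ : IsOneCocycle Z)
    (hH : ∀ h ∈ H, Z h = 0) {σ x y : G} (hy : y⁻¹ * (σ * x) ∈ H) :
    Z y = Z σ + σ • Z x := by
  rw [← hZ, ← mul_inv_cancel_left y (σ * x), hZ y, hH _ hy, smul_zero, add_zero]

/-- Corestriction after restriction is multiplication by the index. -/
theorem isOneCoboundary_index_nsmul {H : Subgroup G} [H.FiniteIndex] (hZ : IsOneCocycle Z)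
    (hH : ∀ h ∈ H, Z h = 0) : IsOneCoboundary fun σ ↦ H.index • Z σ := by
  have := Fintype.ofFinite (G ⧸ H)
  set C : M := ∑ q : G ⧸ H, Z q.out
  refine ⟨-C, fun σ ↦ ?_⟩
  have hout (q : G ⧸ H) : Z (σ • q).out = Z σ + σ • Z q.out := by
    refine hZ.eq_add_smul_of_inv_mul_mem hH (QuotientGroup.eq.mp ?_)
    rw [QuotientGroup.out_eq']
    exact congrArg (σ • ·) (QuotientGroup.out_eq' q).symm
  have hC : C = H.index • Z σ + σ • C := calc
    C = ∑ q : G ⧸ H, Z (σ • q).out := (Equiv.sum_comp (MulAction.toPerm σ) _).symm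
    _ = H.index • Z σ + σ • C := by
      simp only [hout, Finset.sum_add_distrib, Finset.sum_const, Finset.smul_sum,
        Finset.card_univ, Subgroup.index_eq_card, Nat.card_eq_fintype_card, C]
  rw [smul_neg, sub_neg_eq_add, neg_add_eq_sub, eq_sub_iff_add_eq]
  exact hC.symm

end IsOneCocycle

namespace IsOneCoboundary

variable {Z : G → M}

theorem of_nsmul {m : ℕ} (hm : (Nat.card M).Coprime m)
    (hZ : IsOneCoboundary fun σ ↦ m • Z σ) : IsOneCoboundary Z := by
  obtain ⟨C, hC⟩ := hZ
  obtain ⟨A, rfl⟩ := hm.nsmul_right_bijective.surjective C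
  refine ⟨A, fun σ ↦ hm.nsmul_right_bijective.injective ?_⟩
  simp only [hC, smul_comm σ m A, nsmul_sub]

theorem of_sub_coboundary {A : M} (hZ : IsOneCoboundary fun σ ↦ Z σ - (σ • A - A)) :
    IsOneCoboundary Z := by
  obtain ⟨B, hB⟩ := hZ
  refine ⟨A + B, fun σ ↦ ?_⟩
  have h : Z σ - (σ • A - A) = σ • B - B := hB σ
  rw [sub_eq_iff_eq_add.mp h, smul_add]
  abel

end IsOneCoboundary

theorem IsOneCocycle.isOneCoboundary_of_forall_mem_eq_zero {Z : G → M} {H : Subgroup G}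
    [H.FiniteIndex] (hZ : IsOneCocycle Z) (hH : ∀ h ∈ H, Z h = 0)
    (hindex : (Nat.card M).Coprime H.index) : IsOneCoboundary Z :=
  .of_nsmul hindex (hZ.isOneCoboundary_index_nsmul hH)

end OneCocycle

theorem h1loc_vanishes_of_cyclic_sylows_general {G M : Type*} [Group G] [Finite G]
    [AddCommGroup M] [DistribMulAction G M]
    (p : ℕ) (hp : p.Prime) (hM : ∃ k : ℕ, Nat.card M = p ^ k)
    (hcyc : ∀ P : Sylow p G, IsCyclic P)
    (Z : G → M) (hZ : ∀ σ τ : G, Z (σ * τ) = Z σ + σ • Z τ)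
    (hloc : ∀ σ : G, ∃ A : M, Z σ = σ • A - A) :
    ∃ A : M, ∀ σ : G, Z σ = σ • A - A := by
  have := Fact.mk hp
  obtain ⟨k, hk⟩ := hM
  obtain ⟨P⟩ := Sylow.nonempty (p := p) (G := G)
  obtain ⟨g, hg⟩ := (P : Subgroup G).isCyclic_iff_exists_zpowers_eq_top.mp (hcyc P)
  obtain ⟨A, hA⟩ := hloc g
  have hZ' : IsOneCocycle fun σ ↦ Z σ - (σ • A - A) := IsOneCocycle.sub_coboundary hZ A
  have hvanish : (P : Subgroup G) ≤ hZ'.ker := by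
    rw [← hg, Subgroup.zpowers_le, hZ'.mem_ker, hA, sub_self]
  have hindex : (Nat.card M).Coprime P.index := by
    rw [hk]
    exact .pow_left k (hp.coprime_iff_not_dvd.mpr P.not_dvd_index)
  exact IsOneCoboundary.of_sub_coboundary
    (hZ'.isOneCoboundary_of_forall_mem_eq_zero hvanish hindex)

/-- If G is a finite group all of whose p-Sylow subgroups are cyclic and M is a
finite abelian p-group on which G acts, then H¹_loc(G, M) = 0: every cocycle
satisfying the local conditions is a coboundary. -/
theorem h1loc_vanishes_of_cyclic_sylows {G M : Type*} [Group G] [Finite G]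
    [AddCommGroup M] [Finite M] [DistribMulAction G M]
    (p : ℕ) (hp : p.Prime) (hM : ∃ k : ℕ, Nat.card M = p ^ k)
    (hcyc : ∀ P : Sylow p G, IsCyclic P)
    (Z : G → M) (hZ : ∀ σ τ : G, Z (σ * τ) = Z σ + σ • Z τ)
    (hloc : ∀ σ : G, ∃ A : M, Z σ = σ • A - A) :
    ∃ A : M, ∀ σ : G, Z σ = σ • A - A :=
  h1loc_vanishes_of_cyclic_sylows_general p hp hM hcyc Z hZ hloc
end
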